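/- There are no Gaussian integers x, y, z with xyz ≠ 0 and gcd(x, y, z) a unit such that x^4 + i·y^2 = z^4. -/

import Mathlib

/-!
Let `π = 1 + i`, the prime of `ℤ[i]` above `2`, and call `u` odd when `π ∤ u`. Odd squares are
`±1` and odd fourth powers are `1` modulo `4 = -π⁴`; this forces `y` to be even and `x`, `z` odd
and coprime. Then `(z² - x²)(z² + x²) = i y²`, and since the two factors sum to `2z² = -iπ²z²`,
their `π`-adic valuations are `(1, 1)`, which is excluded modulo `4`, or `2` and something
larger. In the latter case their odd parts are coprime, hence units times squares `s²`, `t²`, and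
`(xz)² = e s⁴ + f π^(4k) t⁴` for units `e`, `f`. An odd solution of `Y² = e A⁴ + f π^(4k) B⁴` is
impossible modulo `4` when `k = 0`, and otherwise `e = c²`, and factoring `(Y - cA²)(Y + cA²)` in
the same way yields an odd solution with `k - 1` in place of `k`.
-/

open Zsqrtd

theorem IsCoprime.of_dvd_of_add_eq_of_sub_eq {R : Type*} [CommRing R] {a b w P Q P' Q' : R}
    (hab : IsCoprime a b) (hw : IsCoprime P' w) (hP : P' ∣ P) (hQ : Q' ∣ Q)
    (hsum : P + Q = w * a) (hdiff : Q - P = w * b) : IsCoprime P' Q' := by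
  obtain ⟨r, s, hrs⟩ := hab
  obtain ⟨x, y, hxy⟩ := hw
  obtain ⟨k, rfl⟩ := hP
  obtain ⟨l, rfl⟩ := hQ
  exact ⟨x + y * (r - s) * k, y * (r + s) * l, by
    linear_combination hxy + y * r * hsum + y * s * hdiff + y * w * hrs⟩

theorem IsCoprime.exists_eq_unit_mul_pow {R : Type*} [CommRing R] [IsDomain R] [IsBezout R]
    {P Q g B : R} {r : ℕ} (hPQ : IsCoprime P Q) (hg : IsUnit g) (h : P * Q = g * B ^ r) :
    ∃ u p, IsUnit u ∧ P = u * p ^ r := by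
  obtain ⟨p, u, hu⟩ :=
    exists_associated_pow_of_associated_pow_mul hPQ ⟨hg.unit, by rw [h, IsUnit.unit_spec, mul_comm]⟩
  exact ⟨u, p, u.isUnit, by rw [← hu, mul_comm]⟩

namespace GaussianInt

def onePlusI : GaussianInt := ⟨1, 1⟩

local notation "π" => onePlusI

lemma sqrtd_mul_sqrtd : (sqrtd : GaussianInt) * sqrtd = -1 := by decide

lemma isUnit_sqrtd : IsUnit (sqrtd : GaussianInt) := IsUnit.of_mul_eq_one (-sqrtd) (by decide)

lemma two_eq_neg_sqrtd_mul_onePlusI_sq : (2 : GaussianInt) = -sqrtd * π ^ 2 := by decide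

lemma onePlusI_sq : π ^ 2 = 2 * sqrtd := by decide

lemma onePlusI_pow_four : π ^ 4 = -4 := by decide

lemma prime_onePlusI : Prime π := by
  -- the norm detects units, and `π` has norm `2`
  have : IsLocalHom (normMonoidHom (d := -1)) := ⟨fun z => (isUnit_iff_norm_isUnit z).2⟩
  exact (Irreducible.of_map (f := normMonoidHom (d := -1)) (x := π) Int.prime_two.irreducible).prime

lemma isUnit_iff {u : GaussianInt} : IsUnit u ↔ u = 1 ∨ u = -1 ∨ u = sqrtd ∨ u = -sqrtd := by
  refine ⟨fun hu => ?_, ?_⟩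
  · have h := (norm_eq_one_iff' (by norm_num) u).2 hu
    obtain ⟨a, b⟩ := u
    replace h : a * a + b * b = 1 := by simpa [norm_def] using h
    obtain ⟨ha₁, ha₂⟩ : -1 ≤ a ∧ a ≤ 1 := ⟨by nlinarith, by nlinarith⟩
    obtain ⟨hb₁, hb₂⟩ : -1 ≤ b ∧ b ≤ 1 := ⟨by nlinarith, by nlinarith⟩
    interval_cases a <;> interval_cases b <;> first | decide | norm_num at h
  · rintro (rfl | rfl | rfl | rfl)
    exacts [isUnit_one, isUnit_one.neg, isUnit_sqrtd, isUnit_sqrtd.neg]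

lemma sq_eq_one_or_neg_one_of_isUnit {u : GaussianInt} (hu : IsUnit u) :
    u ^ 2 = 1 ∨ u ^ 2 = -1 := by
  rcases isUnit_iff.1 hu with rfl | rfl | rfl | rfl <;> decide

lemma onePlusI_dvd_iff {u : GaussianInt} : π ∣ u ↔ 2 ∣ u.re + u.im := by
  constructor
  · rintro ⟨v, rfl⟩
    exact ⟨v.re, by simp [onePlusI]; ring⟩
  · rintro ⟨c, hc⟩
    exact ⟨⟨c, u.im - c⟩, by ext <;> simp [onePlusI]; omega⟩

lemma onePlusI_dvd_add {u v : GaussianInt} (hu : ¬π ∣ u) (hv : ¬π ∣ v) : π ∣ u + v := by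
  rw [onePlusI_dvd_iff] at *
  simp only [re_add, im_add]
  omega

lemma not_onePlusI_dvd_mul {u v : GaussianInt} (hu : ¬π ∣ u) (hv : ¬π ∣ v) : ¬π ∣ u * v := by
  rw [prime_onePlusI.dvd_mul]
  tauto

lemma not_onePlusI_dvd_unit_mul {u v : GaussianInt} (hu : IsUnit u) (hv : ¬π ∣ v) :
    ¬π ∣ u * v := by
  rwa [hu.dvd_mul_left]

lemma isCoprime_two_of_not_onePlusI_dvd {u : GaussianInt} (hu : ¬π ∣ u) : IsCoprime u 2 := by
  rw [two_eq_neg_sqrtd_mul_onePlusI_sq, isCoprime_mul_unit_left_right isUnit_sqrtd.neg]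
  exact (prime_onePlusI.irreducible.coprime_iff_not_dvd.2 hu).symm.pow_right

lemma four_dvd_iff {u : GaussianInt} : 4 ∣ u ↔ 4 ∣ u.re ∧ 4 ∣ u.im := intCast_dvd 4 u

lemma two_dvd_sub_one_or_two_dvd_sub_sqrtd {u : GaussianInt} (hu : ¬π ∣ u) :
    2 ∣ u - 1 ∨ 2 ∣ u - sqrtd := by
  rw [onePlusI_dvd_iff] at hu
  simp only [show ∀ v : GaussianInt, 2 ∣ v ↔ 2 ∣ v.re ∧ 2 ∣ v.im from intCast_dvd 2, re_sub,
    im_sub, re_one, im_one, re_sqrtd, im_sqrtd]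
  omega

lemma exists_four_dvd_sq_sub {u : GaussianInt} (hu : ¬π ∣ u) :
    ∃ s : GaussianInt, (s = 1 ∨ s = -1) ∧ 4 ∣ u ^ 2 - s := by
  rcases two_dvd_sub_one_or_two_dvd_sub_sqrtd hu with ⟨a, ha⟩ | ⟨a, ha⟩
  · exact ⟨1, Or.inl rfl, a * (a + 1), by linear_combination (u + 1 + 2 * a) * ha⟩
  · exact ⟨-1, Or.inr rfl, a * (a + sqrtd), by
      linear_combination (u + sqrtd + 2 * a) * ha + sqrtd_mul_sqrtd⟩

lemma four_dvd_pow_four_sub_one {u : GaussianInt} (hu : ¬π ∣ u) : 4 ∣ u ^ 4 - 1 := by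
  obtain ⟨s, hs, hd⟩ := exists_four_dvd_sq_sub hu
  have h : u ^ 4 - 1 = (u ^ 2 - s) * (u ^ 2 + s) := by
    rcases hs with rfl | rfl <;> ring
  exact h ▸ hd.mul_right _

lemma exists_four_dvd_pow_four_sub (u : GaussianInt) :
    ∃ s : GaussianInt, (s = 0 ∨ s = 1) ∧ 4 ∣ u ^ 4 - s := by
  by_cases hu : π ∣ u
  · obtain ⟨v, rfl⟩ := hu
    exact ⟨0, Or.inl rfl, -v ^ 4, by rw [mul_pow, onePlusI_pow_four]; ring⟩
  · exact ⟨1, Or.inr rfl, four_dvd_pow_four_sub_one hu⟩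

lemma le_of_onePlusI_pow_mul_eq {a b : ℕ} {u v : GaussianInt} (hv : ¬π ∣ v)
    (h : π ^ a * u = π ^ b * v) : a ≤ b := by
  by_contra! hba
  obtain ⟨c, rfl⟩ := Nat.exists_eq_add_of_lt hba
  have hv' : v = π ^ (c + 1) * u :=
    mul_left_cancel₀ (pow_ne_zero b prime_onePlusI.ne_zero) (by rw [← h]; ring)
  exact hv (hv' ▸ dvd_mul_of_dvd_left (dvd_pow_self π c.succ_ne_zero) u)

lemma onePlusI_pow_mul_inj {a b : ℕ} {u v : GaussianInt} (hu : ¬π ∣ u) (hv : ¬π ∣ v)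
    (h : π ^ a * u = π ^ b * v) : a = b ∧ u = v := by
  obtain rfl := le_antisymm (le_of_onePlusI_pow_mul_eq hv h) (le_of_onePlusI_pow_mul_eq hu h.symm)
  exact ⟨rfl, mul_left_cancel₀ (pow_ne_zero a prime_onePlusI.ne_zero) h⟩

lemma valuations_of_add_eq_two_mul {α β : ℕ} {P Q a : GaussianInt} (hαβ : α + β ≠ 0)
    (hP : ¬π ∣ P) (hQ : ¬π ∣ Q) (ha : ¬π ∣ a) (h : π ^ α * P + π ^ β * Q = 2 * a) :
    (α = 1 ∧ β = 1) ∨ (α = 2 ∧ 2 < β) ∨ (β = 2 ∧ 2 < α) := by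
  wlog hle : α ≤ β generalizing α β P Q
  · have := this (α := β) (β := α) (P := Q) (Q := P) (by omega) hQ hP (by rw [← h]; ring) (by omega)
    omega
  have ha' : ¬π ∣ -sqrtd * a := not_onePlusI_dvd_unit_mul isUnit_sqrtd.neg ha
  rw [two_eq_neg_sqrtd_mul_onePlusI_sq, mul_comm _ (π ^ 2), mul_assoc] at h
  rcases hle.lt_or_eq with hlt | rfl
  · obtain ⟨c, rfl⟩ := Nat.exists_eq_add_of_lt hlt
    have hodd : ¬π ∣ P + π ^ (c + 1) * Q := fun hd =>
      hP (by simpa using dvd_sub hd (dvd_mul_of_dvd_left (dvd_pow_self π c.succ_ne_zero) Q))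
    have := (onePlusI_pow_mul_inj (a := α) (b := 2) hodd ha' (by rw [← h]; ring)).1
    omega
  · obtain ⟨R, hR⟩ := onePlusI_dvd_add hP hQ
    have := le_of_onePlusI_pow_mul_eq (a := α + 1) (u := R) ha'
      (by rw [← h, pow_succ, mul_assoc, ← hR]; ring)
    omega

lemma exists_odd_parts {P Q a b g B : GaussianInt} {n r : ℕ} (hn : n ≠ 0) (hr : r ≠ 0)
    (ha : ¬π ∣ a) (hab : IsCoprime a b) (hg : IsUnit g) (hB : ¬π ∣ B)
    (hsum : P + Q = 2 * a) (hdiff : Q - P = 2 * b) (hprod : P * Q = π ^ n * (g * B ^ r)) :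
    ∃ α β u v p q, IsUnit u ∧ IsUnit v ∧ ¬π ∣ p ∧ ¬π ∣ q ∧
      P = π ^ α * (u * p ^ r) ∧ Q = π ^ β * (v * q ^ r) ∧ α + β = n ∧
      ((α = 1 ∧ β = 1) ∨ (α = 2 ∧ 2 < β) ∨ (β = 2 ∧ 2 < α)) := by
  have hw : ¬π ∣ g * B ^ r :=
    not_onePlusI_dvd_unit_mul hg fun h => hB (prime_onePlusI.dvd_of_dvd_pow h)
  have hPQ : P * Q ≠ 0 := hprod ▸ mul_ne_zero (pow_ne_zero n prime_onePlusI.ne_zero)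
    fun h => hw (h ▸ dvd_zero _)
  obtain ⟨α, P', hP', rfl⟩ :=
    WfDvdMonoid.max_power_factor (left_ne_zero_of_mul hPQ) prime_onePlusI.irreducible
  obtain ⟨β, Q', hQ', rfl⟩ :=
    WfDvdMonoid.max_power_factor (right_ne_zero_of_mul hPQ) prime_onePlusI.irreducible
  obtain ⟨hαβ, hP'Q'⟩ := onePlusI_pow_mul_inj (a := α + β) (b := n)
    (not_onePlusI_dvd_mul hP' hQ') hw (by rw [← hprod, pow_add]; ring)
  have hcop : IsCoprime P' Q' := hab.of_dvd_of_add_eq_of_sub_eq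
    (isCoprime_two_of_not_onePlusI_dvd hP') (dvd_mul_left _ _) (dvd_mul_left _ _) hsum hdiff
  obtain ⟨u, p, hu, rfl⟩ := hcop.exists_eq_unit_mul_pow hg hP'Q'
  obtain ⟨v, q, hv, rfl⟩ := hcop.symm.exists_eq_unit_mul_pow hg (by rw [mul_comm, hP'Q'])
  have hodd {w t : GaussianInt} (h : ¬π ∣ w * t ^ r) : ¬π ∣ t := fun ht =>
    h (dvd_mul_of_dvd_right (dvd_pow ht hr) w)
  exact ⟨α, β, u, v, p, q, hu, hv, hodd hP', hodd hQ', rfl, rfl, hαβ,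
    valuations_of_add_eq_two_mul (by omega) hP' hQ' ha hsum⟩

lemma onePlusI_dvd_of_pow_four_add_eq {x y z : GaussianInt} (h : x ^ 4 + sqrtd * y ^ 2 = z ^ 4) :
    π ∣ y := by
  by_contra hy
  obtain ⟨a, ha, c, hc⟩ := exists_four_dvd_pow_four_sub x
  obtain ⟨b, hb, d, hd⟩ := exists_four_dvd_pow_four_sub z
  obtain ⟨s, hs, e, he⟩ := exists_four_dvd_sq_sub hy
  have h4 : (4 : GaussianInt) ∣ a + sqrtd * s - b :=
    ⟨d - c - sqrtd * e, by linear_combination h - hc - sqrtd * he + hd⟩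
  rcases ha with rfl | rfl <;> rcases hb with rfl | rfl <;> rcases hs with rfl | rfl <;>
    exact absurd (four_dvd_iff.1 h4) (by decide)

lemma eq_one_or_neg_one_of_four_dvd {Y A e : GaussianInt} (hY : ¬π ∣ Y) (hA : ¬π ∣ A)
    (he : IsUnit e) (h : 4 ∣ Y ^ 2 - e * A ^ 4) : e = 1 ∨ e = -1 := by
  obtain ⟨a, ha⟩ := four_dvd_pow_four_sub_one hA
  obtain ⟨s, hs, c, hc⟩ := exists_four_dvd_sq_sub hY
  obtain ⟨d, hd⟩ := h
  have h4 : (4 : GaussianInt) ∣ s - e := ⟨d - c + e * a, by linear_combination hd - hc + e * ha⟩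
  rcases hs with rfl | rfl <;> rcases isUnit_iff.1 he with rfl | rfl | rfl | rfl <;>
    first | decide | exact absurd (four_dvd_iff.1 h4) (by decide)

def HasOddSolution (k : ℕ) : Prop :=
  ∃ Y A B e f : GaussianInt, IsUnit e ∧ IsUnit f ∧ ¬π ∣ Y ∧ ¬π ∣ A ∧ ¬π ∣ B ∧ IsCoprime Y A ∧
    Y ^ 2 = e * A ^ 4 + f * π ^ (4 * k) * B ^ 4

lemma not_hasOddSolution_zero : ¬HasOddSolution 0 := by
  rintro ⟨Y, A, B, e, f, he, hf, hY, hA, hB, -, heq⟩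
  obtain ⟨a, ha⟩ := four_dvd_pow_four_sub_one hA
  obtain ⟨b, hb⟩ := four_dvd_pow_four_sub_one hB
  obtain ⟨s, hs, c, hc⟩ := exists_four_dvd_sq_sub hY
  have h4 : (4 : GaussianInt) ∣ s - e - f :=
    ⟨e * a + f * b - c, by linear_combination heq + e * ha + f * hb - hc⟩
  rcases hs with rfl | rfl <;> rcases isUnit_iff.1 he with rfl | rfl | rfl | rfl <;>
    rcases isUnit_iff.1 hf with rfl | rfl | rfl | rfl <;>
    exact absurd (four_dvd_iff.1 h4) (by decide)

lemma hasOddSolution_of_factor_sq_sub {k : ℕ} {Y A c u v p q : GaussianInt} (hc : IsUnit c)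
    (hu : IsUnit u) (hv : IsUnit v) (hA : ¬π ∣ A) (hp : ¬π ∣ p) (hq : ¬π ∣ q)
    (hYA : IsCoprime Y A) (hP : Y - c * A ^ 2 = π ^ 2 * (u * p ^ 4))
    (hQ : Y + c * A ^ 2 = π ^ (4 * k + 2) * (v * q ^ 4)) : HasOddSolution k := by
  have hdiff : π ^ (4 * k) * (v * q ^ 4) - u * p ^ 4 = -(sqrtd * c) * A ^ 2 :=
    mul_left_cancel₀ (pow_ne_zero 2 prime_onePlusI.ne_zero) (by
      linear_combination hP - hQ + c * A ^ 2 * two_eq_neg_sqrtd_mul_onePlusI_sq)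
  have hpP : p ∣ Y + A * -(c * A) :=
    Dvd.intro (π ^ 2 * u * p ^ 3) (by linear_combination -hP)
  obtain ⟨w, hw⟩ := (isUnit_sqrtd.mul hc).exists_left_inv
  have hwu : IsUnit w := .of_mul_eq_one _ hw
  refine ⟨A, p, q, w * u, -(w * v), hwu.mul hu, (hwu.mul hv).neg, hA, hp, hq,
    (hYA.symm.add_mul_left_right _).of_isCoprime_of_dvd_right hpP, ?_⟩
  linear_combination (-A ^ 2) * hw + w * hdiff

lemma HasOddSolution.of_succ {k : ℕ} (h : HasOddSolution (k + 1)) : HasOddSolution k := by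
  obtain ⟨Y, A, B, e, f, he, hf, hY, hA, hB, hYA, heq⟩ := h
  have h4 : 4 ∣ Y ^ 2 - e * A ^ 4 := ⟨-(f * π ^ (4 * k) * B ^ 4), by
    rw [heq, mul_add, pow_add, onePlusI_pow_four]; ring⟩
  obtain ⟨c, hc, rfl⟩ : ∃ c, IsUnit c ∧ e = c ^ 2 := by
    rcases eq_one_or_neg_one_of_four_dvd hY hA he h4 with rfl | rfl
    exacts [⟨1, isUnit_one, by ring⟩, ⟨sqrtd, isUnit_sqrtd, by decide⟩]
  obtain ⟨α, β, u, v, p, q, hu, hv, hp, hq, hP, hQ, hαβ, hval⟩ :=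
    exists_odd_parts (P := Y - c * A ^ 2) (Q := Y + c * A ^ 2) (n := 4 * (k + 1)) (by omega)
      four_ne_zero hY ((isCoprime_mul_unit_left_right hc _ _).2 (hYA.pow_right (n := 2))) hf hB
      (by ring) (by ring) (by linear_combination heq)
  rcases hval with ⟨rfl, rfl⟩ | ⟨rfl, -⟩ | ⟨rfl, -⟩
  · omega
  · obtain rfl : β = 4 * k + 2 := by omega
    exact hasOddSolution_of_factor_sq_sub hc hu hv hA hp hq hYA hP hQ
  · obtain rfl : α = 4 * k + 2 := by omega
    -- replacing `c` by `-c` swaps the two factors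
    exact hasOddSolution_of_factor_sq_sub hc.neg hv hu hA hq hp hYA (by rw [← hQ]; ring)
      (by rw [← hP]; ring)

theorem not_hasOddSolution (k : ℕ) : ¬HasOddSolution k := by
  induction k with
  | zero => exact not_hasOddSolution_zero
  | succ k ih => exact fun h => ih h.of_succ

lemma hasOddSolution_of_factor_pow_four_sub {j : ℕ} {x z u v s t : GaussianInt} (hx : ¬π ∣ x)
    (hz : ¬π ∣ z) (hu : IsUnit u) (hv : IsUnit v) (hs : ¬π ∣ s) (ht : ¬π ∣ t)
    (hxz : IsCoprime x z) (hP : z ^ 2 - x ^ 2 = π ^ 2 * (u * s ^ 2))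
    (hQ : z ^ 2 + x ^ 2 = π ^ (2 * j + 2) * (v * t ^ 2)) : HasOddSolution j := by
  have hπ2 : π ^ 2 ≠ 0 := pow_ne_zero 2 prime_onePlusI.ne_zero
  have hsum : u * s ^ 2 + π ^ (2 * j) * (v * t ^ 2) = -sqrtd * z ^ 2 :=
    mul_left_cancel₀ hπ2 (by
      linear_combination -hP - hQ + z ^ 2 * two_eq_neg_sqrtd_mul_onePlusI_sq)
  have hdiff : π ^ (2 * j) * (v * t ^ 2) - u * s ^ 2 = -sqrtd * x ^ 2 :=
    mul_left_cancel₀ hπ2 (by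
      linear_combination hP - hQ + x ^ 2 * two_eq_neg_sqrtd_mul_onePlusI_sq)
  have hxzP : IsCoprime (x * z) (z ^ 2 - x ^ 2) := by
    refine IsCoprime.mul_left ?_ ?_
    · simpa [sub_eq_add_neg, sq] using (hxz.pow_right (n := 2)).add_mul_left_right (-x)
    · simpa [sub_eq_add_neg, sq, add_comm] using
        ((hxz.symm.pow_right (n := 2)).neg_right).add_mul_left_right z
  refine ⟨x * z, s, t, u ^ 2, -v ^ 2, hu.pow 2, (hv.pow 2).neg, not_onePlusI_dvd_mul hx hz, hs,
    ht, hxzP.of_isCoprime_of_dvd_right (Dvd.intro (π ^ 2 * u * s) (by rw [hP]; ring)), ?_⟩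
  linear_combination (u * s ^ 2 + π ^ (2 * j) * (v * t ^ 2)) * hdiff - sqrtd * x ^ 2 * hsum +
    x ^ 2 * z ^ 2 * sqrtd_mul_sqrtd

lemma sq_add_sq_ne_onePlusI_mul {x z u v s t : GaussianInt} (hx : ¬π ∣ x) (hz : ¬π ∣ z)
    (hu : IsUnit u) (hv : IsUnit v) (hs : ¬π ∣ s) (ht : ¬π ∣ t)
    (hP : z ^ 2 - x ^ 2 = π * (u * s ^ 2)) : z ^ 2 + x ^ 2 ≠ π * (v * t ^ 2) := by
  intro hQ
  have hsum : u * s ^ 2 + v * t ^ 2 = -sqrtd * π * z ^ 2 :=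
    mul_left_cancel₀ prime_onePlusI.ne_zero (by
      linear_combination -hP - hQ + z ^ 2 * two_eq_neg_sqrtd_mul_onePlusI_sq)
  have hdiff : v * t ^ 2 - u * s ^ 2 = -sqrtd * π * x ^ 2 :=
    mul_left_cancel₀ prime_onePlusI.ne_zero (by
      linear_combination hP - hQ + x ^ 2 * two_eq_neg_sqrtd_mul_onePlusI_sq)
  have heq : v ^ 2 * t ^ 4 - u ^ 2 * s ^ 4 = -2 * sqrtd * (x * z) ^ 2 := by
    linear_combination (v * t ^ 2 + u * s ^ 2) * hdiff - sqrtd * π * x ^ 2 * hsum +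
      sqrtd ^ 2 * x ^ 2 * z ^ 2 * onePlusI_sq + 2 * sqrtd * x ^ 2 * z ^ 2 * sqrtd_mul_sqrtd
  obtain ⟨a, ha⟩ := four_dvd_pow_four_sub_one hs
  obtain ⟨b, hb⟩ := four_dvd_pow_four_sub_one ht
  obtain ⟨σ, hσ, c, hc⟩ := exists_four_dvd_sq_sub (not_onePlusI_dvd_mul hx hz)
  have h4 : 4 ∣ v ^ 2 - u ^ 2 + 2 * sqrtd * σ := ⟨u ^ 2 * a - v ^ 2 * b - 2 * sqrtd * c, by
    linear_combination heq - v ^ 2 * hb + u ^ 2 * ha - 2 * sqrtd * hc⟩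
  rcases sq_eq_one_or_neg_one_of_isUnit hu with hu2 | hu2 <;>
    rcases sq_eq_one_or_neg_one_of_isUnit hv with hv2 | hv2 <;>
    rcases hσ with rfl | rfl <;> rw [hu2, hv2] at h4 <;>
    exact absurd (four_dvd_iff.1 h4) (by decide)

lemma pow_four_add_sqrtd_mul_sq_ne {m : ℕ} {x z y : GaussianInt} (hm : m ≠ 0) (hx : ¬π ∣ x)
    (hz : ¬π ∣ z) (hy : ¬π ∣ y) (hxz : IsCoprime x z) :
    x ^ 4 + sqrtd * (π ^ m * y) ^ 2 ≠ z ^ 4 := by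
  intro heq
  obtain ⟨α, β, u, v, s, t, hu, hv, hs, ht, hP, hQ, hαβ, hval⟩ :=
    exists_odd_parts (P := z ^ 2 - x ^ 2) (Q := z ^ 2 + x ^ 2) (a := z ^ 2) (b := x ^ 2)
      (n := 2 * m) (by omega) two_ne_zero (fun h => hz (prime_onePlusI.dvd_of_dvd_pow h))
      (hxz.symm.pow (m := 2) (n := 2)) isUnit_sqrtd hy (by ring) (by ring)
      (by linear_combination -heq)
  rcases hval with ⟨rfl, rfl⟩ | ⟨rfl, hβ⟩ | ⟨rfl, hα⟩
  · exact sq_add_sq_ne_onePlusI_mul hx hz hu hv hs ht (by rw [hP, pow_one]) (by rw [hQ, pow_one])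
  · obtain ⟨j, rfl⟩ : ∃ j, β = 2 * j + 2 := ⟨m - 2, by omega⟩
    exact not_hasOddSolution j (hasOddSolution_of_factor_pow_four_sub hx hz hu hv hs ht hxz hP hQ)
  · obtain ⟨j, rfl⟩ : ∃ j, α = 2 * j + 2 := ⟨m - 2, by omega⟩
    -- `x ↦ i x` preserves `x⁴` and swaps the two factors
    exact not_hasOddSolution j (hasOddSolution_of_factor_pow_four_sub
      (not_onePlusI_dvd_unit_mul isUnit_sqrtd hx) hz hv hu ht hs
      ((isCoprime_mul_unit_left_left isUnit_sqrtd _ _).2 hxz)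
      (by linear_combination hQ - x ^ 2 * sqrtd_mul_sqrtd)
      (by linear_combination hP + x ^ 2 * sqrtd_mul_sqrtd))

end GaussianInt

open GaussianInt in
/-- The equation `x⁴ + i·y² = z⁴` has no nontrivial solutions over the Gaussian
integers (`i = sqrtd : ℤ[i]` is the imaginary unit). -/
theorem no_nontrivial_solution_x4_add_i_y2_eq_z4 :
    ¬ ∃ x y z : GaussianInt, x * y * z ≠ 0 ∧
      (∀ d : GaussianInt, d ∣ x → d ∣ y → d ∣ z → IsUnit d) ∧
      x ^ 4 + sqrtd * y ^ 2 = z ^ 4 := by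
  rintro ⟨x, y, z, hxyz, hgcd, heq⟩
  have dvd_z4 {d : GaussianInt} (hx : d ∣ x) (hy : d ∣ y) : d ∣ z ^ 4 :=
    heq ▸ dvd_add (dvd_pow hx four_ne_zero) ((dvd_pow hy two_ne_zero).mul_left _)
  have dvd_x4 {d : GaussianInt} (hy : d ∣ y) (hz : d ∣ z) : d ∣ x ^ 4 :=
    eq_sub_of_add_eq heq ▸ dvd_sub (dvd_pow hz four_ne_zero) ((dvd_pow hy two_ne_zero).mul_left _)
  have dvd_y2 {d : GaussianInt} (hx : d ∣ x) (hz : d ∣ z) : d ∣ y ^ 2 :=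
    isUnit_sqrtd.dvd_mul_left.1 <|
      eq_sub_of_add_eq' heq ▸ dvd_sub (dvd_pow hz four_ne_zero) (dvd_pow hx four_ne_zero)
  have hy : onePlusI ∣ y := onePlusI_dvd_of_pow_four_add_eq heq
  have hx : ¬onePlusI ∣ x := fun hx => prime_onePlusI.not_isUnit <|
    hgcd _ hx hy (prime_onePlusI.dvd_of_dvd_pow (dvd_z4 hx hy))
  have hz : ¬onePlusI ∣ z := fun hz => prime_onePlusI.not_isUnit <|
    hgcd _ (prime_onePlusI.dvd_of_dvd_pow (dvd_x4 hy hz)) hy hz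
  have hxz : IsCoprime x z := isCoprime_of_prime_dvd (fun h => hx (h.1 ▸ dvd_zero _))
    fun p hp hpx hpz => hp.not_isUnit <| hgcd p hpx (hp.dvd_of_dvd_pow (dvd_y2 hpx hpz)) hpz
  obtain ⟨m, y', hy', rfl⟩ := WfDvdMonoid.max_power_factor
    (right_ne_zero_of_mul (left_ne_zero_of_mul hxyz)) prime_onePlusI.irreducible
  have hm : m ≠ 0 := by
    rintro rfl
    exact hy' (by simpa using hy)
  exact pow_four_add_sqrtd_mul_sq_ne hm hx hz hy' hxz heq
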